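/- Let k be a field and 𝒫_n the poset consisting of a chain 1 < 2 < ⋯ < n−1 together with two additional incomparable points 1', 1''. The number of isomorphism classes of indecomposable k-linear representations of 𝒫_n equals (1/2)n² + (7/2)n; equivalently, it equals (n²+3n+2) − (n²−n)/2 − 2. -/

import Mathlib

/-- A `k`-linear representation of the poset `𝒫_n = {1 < ⋯ < n−1} ⊔ {1'} ⊔ {1''}`, with
total space `k^d` (every finite-dimensional representation is isomorphic to one of
this form). -/
structure PosetRep (k : Type) [Field k] (n : ℕ) where
  d : ℕ
  chain : Fin (n - 1) → Submodule k (Fin d → k)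
  antitone : ∀ i j : Fin (n - 1), i ≤ j → chain j ≤ chain i
  left : Submodule k (Fin d → k)
  right : Submodule k (Fin d → k)

/-- Isomorphism of representations of `𝒫_n`. -/
def PosetRep.Iso {k : Type} [Field k] {n : ℕ} (R S : PosetRep k n) : Prop :=
  ∃ e : (Fin R.d → k) ≃ₗ[k] (Fin S.d → k),
    (∀ i, (R.chain i).map (e : (Fin R.d → k) →ₗ[k] (Fin S.d → k)) = S.chain i) ∧
    R.left.map (e : (Fin R.d → k) →ₗ[k] (Fin S.d → k)) = S.left ∧
    R.right.map (e : (Fin R.d → k) →ₗ[k] (Fin S.d → k)) = S.right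

/-- Indecomposability: nonzero, and no nontrivial direct sum decomposition compatible
with all distinguished subspaces. -/
def PosetRep.Indec {k : Type} [Field k] {n : ℕ} (R : PosetRep k n) : Prop :=
  R.d ≠ 0 ∧
  ¬ ∃ U U' : Submodule k (Fin R.d → k), U ≠ ⊥ ∧ U' ≠ ⊥ ∧ IsCompl U U' ∧
      (∀ i, R.chain i = (R.chain i ⊓ U) ⊔ (R.chain i ⊓ U')) ∧
      R.left = (R.left ⊓ U) ⊔ (R.left ⊓ U') ∧
      R.right = (R.right ⊓ U) ⊔ (R.right ⊓ U')

/-!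
An idempotent endomorphism `π` of an indecomposable representation is `0` or `1`, since
`range π ⊕ ker π` splits every subspace that `π` preserves. Hence if morphisms `ι : M → R` and
`p : R → M` satisfy `p ∘ ι = id` with `M ≠ 0` and `R` indecomposable, `ι` is an isomorphism: this
reduces the classification to exhibiting such a retraction onto one of the models.

Let `m` be the last nonzero step of the chain flag. If some `x ≠ 0` there admits a functional
`φ` with `φ x = 1` vanishing on whichever of the two extra subspaces does not contain `x`, then
`R ≅ V_{m,ℓ',ℓ''}`. Otherwise that step meets the sum of the two extra subspaces but neither
of them; writing an element of it as `u + v` with `u`, `v` as deep in the flag as possible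
(depth `s`) yields a retraction onto `W_{s,m}`. The models are indecomposable and are told apart by their
dimension vectors, so there are `4n + n(n-1)/2` classes.
-/

open Submodule

theorem Nat.exists_lt_and_not_succ {P : ℕ → Prop} (h0 : P 0) {m : ℕ} (hm : ¬ P m) :
    ∃ s < m, P s ∧ ¬ P (s + 1) := by
  induction m with
  | zero => exact absurd h0 hm
  | succ m ih =>
    by_cases h : P m
    · exact ⟨m, lt_add_one m, h, hm⟩
    · obtain ⟨s, hs, hPs⟩ := ih h
      exact ⟨s, hs.trans (lt_add_one m), hPs⟩

theorem Nat.card_quot_eq_of_representatives {α ι : Type*} {r : α → α → Prop} (hr : Equivalence r)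
    (f : ι → α) (hsurj : ∀ a, ∃ i, r (f i) a) (hinj : ∀ i j, r (f i) (f j) → i = j) :
    Nat.card (Quot r) = Nat.card ι := by
  refine (Nat.card_eq_of_bijective (fun i => Quot.mk r (f i)) ⟨fun i j h => ?_, fun q => ?_⟩).symm
  · exact hinj i j (hr.eqvGen_iff.mp (Quot.eqvGen_exact h))
  · induction q using Quot.ind with
    | mk a => exact (hsurj a).imp fun i h => Quot.sound h

theorem Fin.eq_of_forall_lt_iff {n : ℕ} {ℓ ℓ' : Fin n}
    (h : ∀ i : Fin (n - 1), (i : ℕ) < ℓ ↔ (i : ℕ) < ℓ') : ℓ = ℓ' := by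
  ext
  by_contra hne
  rcases Nat.lt_or_gt_of_ne hne with hlt | hlt
  · have := h ⟨ℓ, by omega⟩
    simp only at this
    omega
  · have := h ⟨ℓ', by omega⟩
    simp only at this
    omega

section Lattice
variable {α : Type*} [Lattice α] [BoundedOrder α] {a b c : α}

theorem IsAtom.le_or_le_of_eq_inf_sup_inf (ha : IsAtom a) (h : a = (a ⊓ b) ⊔ (a ⊓ c)) :
    a ≤ b ∨ a ≤ c := by
  rcases ha.le_iff.mp (inf_le_left : a ⊓ b ≤ a) with hb | hb
  · rcases ha.le_iff.mp (inf_le_left : a ⊓ c ≤ a) with hc | hc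
    · exact absurd (by rw [h, hb, hc, sup_bot_eq]) ha.1
    · exact .inr (inf_eq_left.mp hc)
  · exact .inl (inf_eq_left.mp hb)

theorem IsCompl.eq_bot_of_sup_le (h : IsCompl a b) {p q : α} (hpq : p ⊔ q = ⊤) (hp : p ≤ a)
    (hq : q ≤ a) : b = ⊥ :=
  h.disjoint.eq_bot_of_ge (le_top.trans (hpq ▸ sup_le hp hq))

end Lattice

section Module
variable {R V W : Type*} [Ring R] [AddCommGroup V] [Module R V] [AddCommGroup W] [Module R W]

theorem eq_inf_range_sup_inf_ker {π : V →ₗ[R] V} (hπ : IsIdempotentElem π) {P : Submodule R V}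
    (hP : P.map π ≤ P) : P = (P ⊓ LinearMap.range π) ⊔ (P ⊓ LinearMap.ker π) := by
  refine le_antisymm (fun y hy => ?_) (sup_le inf_le_left inf_le_left)
  have hπy : π y ∈ P := hP (mem_map_of_mem hy)
  have hker : π (y - π y) = 0 := by
    rw [map_sub, ← Module.End.mul_apply, hπ.eq, sub_self]
  rw [← add_sub_cancel (π y) y]
  exact add_mem_sup ⟨hπy, LinearMap.mem_range_self π y⟩ ⟨P.sub_mem hy hπy, hker⟩

theorem map_eq_of_comp_eq_id {ι : V →ₗ[R] W} {p : W →ₗ[R] V} (hιp : ι ∘ₗ p = LinearMap.id)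
    {P : Submodule R V} {Q : Submodule R W} (hι : P.map ι ≤ Q) (hp : Q.map p ≤ P) :
    P.map ι = Q :=
  le_antisymm hι fun y hy => ⟨p y, hp (mem_map_of_mem hy), LinearMap.congr_fun hιp y⟩

theorem span_singleton_sup_span_singleton_eq_top {w₁ w₂ : V}
    (h : ∀ y, ∃ a b : R, a • w₁ + b • w₂ = y) : span R {w₁} ⊔ span R {w₂} = ⊤ := by
  refine eq_top_iff.mpr fun y _ => ?_
  obtain ⟨a, b, rfl⟩ := h y
  exact add_mem_sup (smul_mem _ _ (mem_span_singleton_self _))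
    (smul_mem _ _ (mem_span_singleton_self _))

end Module

section VectorSpace
variable {k V : Type*} [Field k] [AddCommGroup V] [Module k V]

theorem exists_dual_eq_one_of_notMem {p : Submodule k V} {x : V} (hx : x ∉ p) :
    ∃ f : V →ₗ[k] k, f x = 1 ∧ ∀ y ∈ p, f y = 0 := by
  obtain ⟨f, hfx, hfp⟩ := p.exists_dual_map_eq_bot_of_notMem hx inferInstance
  refine ⟨(f x)⁻¹ • f, by simp [hfx], fun y hy => ?_⟩
  have hfy : f y ∈ p.map f := mem_map_of_mem hy
  rw [hfp, mem_bot] at hfy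
  simp [hfy]

theorem exists_dual_eq_zero_on_eq_on {A B : Submodule k V} (f : V →ₗ[k] k)
    (hf : ∀ y ∈ A ⊓ B, f y = 0) :
    ∃ g : V →ₗ[k] k, (∀ y ∈ A, g y = 0) ∧ ∀ y ∈ B, g y = f y := by
  have hf' : f ∈ (A ⊓ B).dualAnnihilator := (mem_dualAnnihilator f).mpr hf
  rw [Subspace.dualAnnihilator_inf_eq] at hf'
  obtain ⟨a, ha, b, hb, rfl⟩ := mem_sup.mp hf'
  refine ⟨a, (mem_dualAnnihilator a).mp ha, fun y hy => ?_⟩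
  simp [(mem_dualAnnihilator b).mp hb y hy]

theorem finrank_ite_top_bot {d : ℕ} (c : Prop) [Decidable c] :
    Module.finrank k (if c then ⊤ else ⊥ : Submodule k (Fin d → k)) = if c then d else 0 :=
  (apply_ite (fun P : Submodule k (Fin d → k) => Module.finrank k P) c ⊤ ⊥).trans (by simp)

theorem exists_dual_line_or {W A B : Submodule k V} (hW : W ≠ ⊥) :
    (∃ x ∈ W, ∃ φ : V →ₗ[k] k, φ x = 1 ∧
      (x ∈ A ∨ ∀ y ∈ A, φ y = 0) ∧ (x ∈ B ∨ ∀ y ∈ B, φ y = 0)) ∨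
    (W ⊓ A = ⊥ ∧ W ⊓ B = ⊥ ∧ ∃ u ∈ A, ∃ v ∈ B, u + v ∈ W ∧ u + v ≠ 0) := by
  have line : ∀ x ∈ W, ∀ Q : Submodule k V, x ∉ Q → (x ∈ A ∨ A ≤ Q) → (x ∈ B ∨ B ≤ Q) →
      ∃ x ∈ W, ∃ φ : V →ₗ[k] k, φ x = 1 ∧
        (x ∈ A ∨ ∀ y ∈ A, φ y = 0) ∧ (x ∈ B ∨ ∀ y ∈ B, φ y = 0) := by
    intro x hx Q hxQ hA hB
    obtain ⟨φ, hφx, hφQ⟩ := exists_dual_eq_one_of_notMem hxQ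
    exact ⟨x, hx, φ, hφx, hA.imp_right fun h y hy => hφQ y (h hy),
      hB.imp_right fun h y hy => hφQ y (h hy)⟩
  rcases ne_or_eq (W ⊓ A) ⊥ with hWA | hWA
  · obtain ⟨x, ⟨hxW, hxA⟩, hx0⟩ := (Submodule.ne_bot_iff _).mp hWA
    by_cases hxB : x ∈ B
    · exact .inl (line x hxW ⊥ (by simpa using hx0) (.inl hxA) (.inl hxB))
    · exact .inl (line x hxW B hxB (.inl hxA) (.inr le_rfl))
  rcases ne_or_eq (W ⊓ B) ⊥ with hWB | hWB
  · obtain ⟨x, ⟨hxW, hxB⟩, hx0⟩ := (Submodule.ne_bot_iff _).mp hWB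
    by_cases hxA : x ∈ A
    · exact .inl (line x hxW ⊥ (by simpa using hx0) (.inl hxA) (.inl hxB))
    · exact .inl (line x hxW A hxA (.inr le_rfl) (.inl hxB))
  obtain ⟨x, hxW, hx0⟩ := (Submodule.ne_bot_iff W).mp hW
  by_cases hxAB : x ∈ A ⊔ B
  · obtain ⟨u, hu, v, hv, rfl⟩ := mem_sup.mp hxAB
    exact .inr ⟨hWA, hWB, u, hu, v, hv, hxW, hx0⟩
  · exact .inl (line x hxW (A ⊔ B) hxAB (.inr le_sup_left) (.inr le_sup_right))

/-- Take `s` maximal such that some `u ∈ A ⊓ F s`, `v ∈ B ⊓ F s` have `0 ≠ u + v ∈ F m`.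
Maximality keeps `u` out of `B ⊔ (A ⊓ F (s + 1))`, which gives `f`; then `g` exists because `f`
vanishes on `A ⊓ F (s + 1)`. -/
theorem exists_dual_plane {F : ℕ → Submodule k V} (hF : Antitone F) (hF0 : F 0 = ⊤)
    {A B : Submodule k V} {m : ℕ} (hA : F m ⊓ A = ⊥) (hB : F m ⊓ B = ⊥) {u v : V} (hu : u ∈ A)
    (hv : v ∈ B) (huv : u + v ∈ F m) (huv0 : u + v ≠ 0) :
    ∃ s < m, ∃ u ∈ A ⊓ F s, ∃ v ∈ B ⊓ F s, u + v ∈ F m ∧ ∃ f g : V →ₗ[k] k,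
      f u = 1 ∧ g v = 1 ∧ (∀ y ∈ B, f y = 0) ∧ (∀ y ∈ A, g y = 0) ∧
      ∀ y ∈ F (s + 1), g y = f y := by
  let Q j := ∃ u ∈ A ⊓ F j, ∃ v ∈ B ⊓ F j, u + v ∈ F m ∧ u + v ≠ 0
  have hQm : ¬ Q m := by
    rintro ⟨u, hu, v, hv, -, huv0⟩
    rw [inf_comm, hA, mem_bot] at hu
    rw [inf_comm, hB, mem_bot] at hv
    exact huv0 (by rw [hu, hv, add_zero])
  obtain ⟨s, hsm, ⟨u, ⟨huA, huF⟩, v, ⟨hvB, hvF⟩, huv, huv0⟩, hQs⟩ :=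
    Nat.exists_lt_and_not_succ (P := Q) ⟨u, ⟨hu, hF0 ▸ mem_top⟩, v, ⟨hv, hF0 ▸ mem_top⟩, huv, huv0⟩
      hQm
  have huv' : u + v ∈ F (s + 1) := hF hsm huv
  have hu' : u ∉ B ⊔ (A ⊓ F (s + 1)) := by
    intro hmem
    obtain ⟨b, hb, a, ha, hba⟩ := mem_sup.mp hmem
    have hsum : a + (b + v) = u + v := by rw [← hba]; abel
    refine hQs ⟨a, ha, b + v, ⟨B.add_mem hb hvB, ?_⟩, hsum ▸ huv, hsum ▸ huv0⟩
    rw [show b + v = u + v - a by rw [← hsum]; abel]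
    exact sub_mem huv' ha.2
  obtain ⟨f, hfu, hf⟩ := exists_dual_eq_one_of_notMem hu'
  obtain ⟨g, hgA, hgF⟩ := exists_dual_eq_zero_on_eq_on (A := A) (B := F (s + 1)) f
    fun y hy => hf y (mem_sup_right hy)
  refine ⟨s, hsm, u, ⟨huA, huF⟩, v, ⟨hvB, hvF⟩, huv, f, g, hfu, ?_,
    fun y hy => hf y (mem_sup_left hy), hgA, hgF⟩
  have := hgF _ huv'
  rwa [map_add, map_add, hgA u huA, hfu, hf v (mem_sup_left hvB), zero_add, add_zero] at this

end VectorSpace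

namespace PosetRep
variable {k : Type} [Field k] {n : ℕ}

theorem iso_equivalence : Equivalence (@Iso k _ n) where
  refl R := ⟨LinearEquiv.refl k _, fun i => map_id _, map_id _, map_id _⟩
  symm := by
    rintro R S ⟨e, hc, hl, hr⟩
    exact ⟨e.symm, fun i => (map_symm_eq_iff e).mpr (hc i), (map_symm_eq_iff e).mpr hl,
      (map_symm_eq_iff e).mpr hr⟩
  trans := by
    rintro R S T ⟨e, hc, hl, hr⟩ ⟨f, gc, gl, gr⟩
    refine ⟨e.trans f, fun i => ?_, ?_, ?_⟩ <;> rw [LinearEquiv.coe_trans, map_comp]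
    · rw [hc i, gc i]
    · rw [hl, gl]
    · rw [hr, gr]

def IsHom (R S : PosetRep k n) (φ : (Fin R.d → k) →ₗ[k] (Fin S.d → k)) : Prop :=
  (∀ i, (R.chain i).map φ ≤ S.chain i) ∧ R.left.map φ ≤ S.left ∧ R.right.map φ ≤ S.right

theorem IsHom.comp {R S T : PosetRep k n} {φ : (Fin R.d → k) →ₗ[k] (Fin S.d → k)}
    {ψ : (Fin S.d → k) →ₗ[k] (Fin T.d → k)} (hψ : IsHom S T ψ) (hφ : IsHom R S φ) :
    IsHom R T (ψ ∘ₗ φ) := by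
  refine ⟨fun i => ?_, ?_, ?_⟩ <;> rw [map_comp]
  · exact (map_mono (hφ.1 i)).trans (hψ.1 i)
  · exact (map_mono hφ.2.1).trans hψ.2.1
  · exact (map_mono hφ.2.2).trans hψ.2.2

theorem Indec.eq_zero_or_eq_one {R : PosetRep k n} (hR : R.Indec)
    {π : Module.End k (Fin R.d → k)} (hπ : IsIdempotentElem π) (hπR : IsHom R R π) :
    π = 0 ∨ π = 1 := by
  by_contra! h
  refine hR.2 ⟨LinearMap.range π, LinearMap.ker π, LinearMap.range_eq_bot.not.mpr h.1, ?_,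
    LinearMap.IsIdempotentElem.isCompl hπ, fun i => eq_inf_range_sup_inf_ker hπ (hπR.1 i),
    eq_inf_range_sup_inf_ker hπ hπR.2.1, eq_inf_range_sup_inf_ker hπ hπR.2.2⟩
  refine fun hker => h.2 (LinearMap.ext fun y => LinearMap.ker_eq_bot.mp hker ?_)
  rw [← Module.End.mul_apply, hπ.eq, Module.End.one_apply]

theorem Indec.iso_of_comp_eq_id {M R : PosetRep k n} (hR : R.Indec) (hM : M.d ≠ 0)
    {ι : (Fin M.d → k) →ₗ[k] (Fin R.d → k)} {p : (Fin R.d → k) →ₗ[k] (Fin M.d → k)}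
    (hι : IsHom M R ι) (hp : IsHom R M p) (hpι : p ∘ₗ ι = LinearMap.id) : M.Iso R := by
  have hidem : IsIdempotentElem (ι ∘ₗ p) := by
    rw [IsIdempotentElem, Module.End.mul_eq_comp, LinearMap.comp_assoc,
      ← LinearMap.comp_assoc p, hpι, LinearMap.id_comp]
  have hιp : ι ∘ₗ p = LinearMap.id := by
    refine (hR.eq_zero_or_eq_one hidem (hι.comp hp)).resolve_left fun h0 => ?_
    have : Nonempty (Fin M.d) := ⟨⟨0, Nat.pos_of_ne_zero hM⟩⟩
    obtain ⟨c, hc⟩ := exists_ne (0 : Fin M.d → k)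
    have hιc : ι (p (ι c)) = 0 := LinearMap.congr_fun h0 (ι c)
    rw [← LinearMap.comp_apply p ι, hpι, LinearMap.id_apply] at hιc
    apply hc
    simpa [hιc] using (LinearMap.congr_fun hpι c).symm
  exact ⟨LinearEquiv.ofLinearMap ι p hιp hpι, fun i => map_eq_of_comp_eq_id hιp (hι.1 i) (hp.1 i),
    map_eq_of_comp_eq_id hιp hι.2.1 hp.2.1, map_eq_of_comp_eq_id hιp hι.2.2 hp.2.2⟩

/-- The subspace at the chain point `j` of the paper: `R.chain ⟨j - 1, _⟩`, extended by `⊤` at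
`j = 0` and by `⊥` beyond `n - 1`. -/
def flag (R : PosetRep k n) (j : ℕ) : Submodule k (Fin R.d → k) :=
  if hj : j = 0 then ⊤ else if h : j ≤ n - 1 then R.chain ⟨j - 1, by omega⟩ else ⊥

variable (R : PosetRep k n)

theorem flag_zero : R.flag 0 = ⊤ := rfl

theorem flag_succ (i : Fin (n - 1)) : R.flag (i + 1) = R.chain i := by
  rw [flag, dif_neg (Nat.succ_ne_zero _), dif_pos (by omega)]
  rfl

theorem flag_eq_bot {j : ℕ} (hj : n - 1 < j) : R.flag j = ⊥ := by
  rw [flag, dif_neg (by omega), dif_neg (by omega)]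

theorem flag_antitone : Antitone R.flag := by
  intro i j hij
  rcases Nat.eq_zero_or_pos i with rfl | hi
  · exact le_top
  rcases le_or_gt j (n - 1) with hj | hj
  · rw [flag, dif_neg (by omega), dif_pos hj, flag, dif_neg (by omega), dif_pos (by omega)]
    exact R.antitone _ _ (Fin.mk_le_mk.mpr (by omega))
  · rw [R.flag_eq_bot hj]
    exact bot_le

theorem exists_last_flag (hn : 1 ≤ n) (hd : R.d ≠ 0) :
    ∃ m : Fin n, R.flag m ≠ ⊥ ∧ ∀ j, (m : ℕ) < j → R.flag j = ⊥ := by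
  have : Nonempty (Fin R.d) := ⟨⟨0, Nat.pos_of_ne_zero hd⟩⟩
  obtain ⟨m, hmn, hm, hm1⟩ := Nat.exists_lt_and_not_succ (P := fun j => R.flag j ≠ ⊥)
    (by simp [flag_zero]) (not_not.mpr (R.flag_eq_bot (by omega : n - 1 < n)))
  exact ⟨⟨m, hmn⟩, hm, fun j hj => le_bot_iff.mp (not_not.mp hm1 ▸ R.flag_antitone hj)⟩

end PosetRep

namespace PosetRep
variable (k : Type) [Field k] (n : ℕ)

/-- The one-dimensional indecomposable `V_{ℓ,ℓ',ℓ''}`, with `ℓ' = a` and `ℓ'' = b`. -/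
def lineRep (ℓ : Fin n) (a b : Bool) : PosetRep k n where
  d := 1
  chain i := if (i : ℕ) < ℓ then ⊤ else ⊥
  antitone i j hij := by
    have : (i : ℕ) ≤ j := hij
    split_ifs <;> first | exact le_rfl | exact bot_le | exact le_top | omega
  left := if a then ⊤ else ⊥
  right := if b then ⊤ else ⊥

/-- The two-dimensional indecomposable `W_{s,t}`. -/
def planeRep (s t : Fin n) : PosetRep k n where
  d := 2
  chain i := if (i : ℕ) < s then ⊤ else if (i : ℕ) < t then span k {![1, 1]} else ⊥
  antitone i j hij := by
    have : (i : ℕ) ≤ j := hij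
    split_ifs <;> first | exact le_rfl | exact bot_le | exact le_top | omega
  left := span k {![1, 0]}
  right := span k {![0, 1]}

abbrev ModelIndex : Type := (Fin n × Bool × Bool) ⊕ {st : Fin n × Fin n // st.1 < st.2}

def model : ModelIndex n → PosetRep k n
  | .inl (ℓ, a, b) => lineRep k n ℓ a b
  | .inr ⟨(s, t), _⟩ => planeRep k n s t

theorem two_mul_card_modelIndex : 2 * Fintype.card (ModelIndex n) = n ^ 2 + 7 * n := by
  rw [Fintype.card_sum, Fintype.card_subtype, Fintype.card_product_filter_lt]
  simp only [Fintype.card_prod, Fintype.card_fin, Fintype.card_bool]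
  rcases n with _ | n
  · rfl
  · rw [mul_add, Nat.choose_two_right, Nat.mul_div_cancel' (Nat.even_mul_pred_self _).two_dvd]
    simp only [Nat.add_sub_cancel]
    ring

variable {k n}

noncomputable def dimVector (R : PosetRep k n) : ℕ × (Fin (n - 1) → ℕ) × ℕ × ℕ :=
  (R.d, fun i => Module.finrank k (R.chain i), Module.finrank k R.left, Module.finrank k R.right)

theorem Iso.dimVector_eq {R S : PosetRep k n} (h : R.Iso S) : R.dimVector = S.dimVector := by
  obtain ⟨e, hc, hl, hr⟩ := h
  have hd := e.finrank_eq
  simp only [Module.finrank_fin_fun] at hd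
  unfold dimVector
  refine Prod.ext hd (Prod.ext (funext fun i => ?_) (Prod.ext ?_ ?_)) <;> dsimp only
  · rw [← hc i, LinearEquiv.finrank_map_eq]
  · rw [← hl, LinearEquiv.finrank_map_eq]
  · rw [← hr, LinearEquiv.finrank_map_eq]

theorem dimVector_lineRep (ℓ : Fin n) (a b : Bool) :
    (lineRep k n ℓ a b).dimVector =
      (1, fun i : Fin (n - 1) => if (i : ℕ) < ℓ then 1 else 0, if a then 1 else 0,
        if b then 1 else 0) :=
  Prod.ext rfl (Prod.ext (funext fun _ => finrank_ite_top_bot _)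
    (Prod.ext (finrank_ite_top_bot _) (finrank_ite_top_bot _)))

theorem dimVector_planeRep (s t : Fin n) :
    (planeRep k n s t).dimVector =
      (2, fun i : Fin (n - 1) => if (i : ℕ) < s then 2 else if (i : ℕ) < t then 1 else 0,
        1, 1) := by
  have hline : ∀ w : Fin 2 → k, w ≠ 0 → Module.finrank k (span k {w}) = 1 :=
    fun _ => finrank_span_singleton
  refine Prod.ext rfl (Prod.ext (funext fun i => ?_) (Prod.ext ?_ ?_))
  · show Module.finrank k ↥(if (i : ℕ) < s then ⊤ else
      if (i : ℕ) < t then span k {![1, 1]} else ⊥ : Submodule k (Fin 2 → k)) =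
      if (i : ℕ) < s then 2 else if (i : ℕ) < t then 1 else 0
    -- `simp` cannot rewrite an `if` under the coercion `↥`, but `rw` can
    by_cases h1 : (i : ℕ) < s
    · rw [if_pos h1, if_pos h1]
      simp
    by_cases h2 : (i : ℕ) < t
    · rw [if_neg h1, if_neg h1, if_pos h2, if_pos h2]
      exact hline _ (by simp)
    · rw [if_neg h1, if_neg h1, if_neg h2, if_neg h2]
      simp
  · exact hline _ (by simp)
  · exact hline _ (by simp)

theorem eq_of_iso_model {i j : ModelIndex n} (h : (model k n i).Iso (model k n j)) : i = j := by
  have hdim := h.dimVector_eq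
  rcases i with ⟨ℓ, a, b⟩ | ⟨⟨s, t⟩, hst⟩ <;> rcases j with ⟨ℓ', a', b'⟩ | ⟨⟨s', t'⟩, hst'⟩ <;>
    simp only [model, dimVector_lineRep, dimVector_planeRep, Prod.mk.injEq, funext_iff] at hdim
  · obtain ⟨-, hc, ha, hb⟩ := hdim
    have hℓ : ℓ = ℓ' := Fin.eq_of_forall_lt_iff fun i => by
      have := hc i
      split_ifs at this <;> omega
    cases a <;> cases a' <;> cases b <;> cases b' <;> simp_all
  · omega
  · omega
  · obtain ⟨-, hc, -⟩ := hdim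
    dsimp only at hst hst'
    have hs : s = s' := Fin.eq_of_forall_lt_iff fun i => by
      have := hc i
      split_ifs at this <;> omega
    have ht : t = t' := Fin.eq_of_forall_lt_iff fun i => by
      have := hc i
      split_ifs at this <;> omega
    subst hs ht
    rfl

theorem lineRep_indec (ℓ : Fin n) (a b : Bool) : (lineRep k n ℓ a b).Indec := by
  refine ⟨one_ne_zero, ?_⟩
  rintro ⟨U, U', hU, hU', hUU', -⟩
  have hsum : Module.finrank k U + Module.finrank k U' = 1 :=
    (finrank_add_eq_of_isCompl hUU').trans (Module.finrank_fin_fun k)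
  have := one_le_finrank_iff.mpr hU
  have := one_le_finrank_iff.mpr hU'
  omega

theorem planeRep_indec {s t : Fin n} (hst : s < t) : (planeRep k n s t).Indec := by
  refine ⟨two_ne_zero, ?_⟩
  rintro ⟨U, U', hU, hU', hUU', hc, hl, hr⟩
  have hline : ∀ w : Fin 2 → k, w ≠ 0 → span k {w} = (span k {w} ⊓ U) ⊔ (span k {w} ⊓ U') →
      span k {w} ≤ U ∨ span k {w} ≤ U' :=
    fun w hw => (nonzero_span_atom w hw).le_or_le_of_eq_inf_sup_inf
  have hchain : (planeRep k n s t).chain ⟨s, by omega⟩ =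
      (span k {![1, 1]} : Submodule k (Fin 2 → k)) :=
    (if_neg (lt_irrefl (s : ℕ))).trans (if_pos hst)
  have h10 := hline ![1, 0] (by simp) hl
  have h01 := hline ![0, 1] (by simp) hr
  have h11 := hline ![1, 1] (by simp) (hchain ▸ hc ⟨s, by omega⟩)
  have top₁ : span k {![1, 0]} ⊔ span k {![0, 1]} = (⊤ : Submodule k (Fin 2 → k)) :=
    span_singleton_sup_span_singleton_eq_top fun y => ⟨y 0, y 1, by ext i; fin_cases i <;> simp⟩
  have top₂ : span k {![1, 0]} ⊔ span k {![1, 1]} = (⊤ : Submodule k (Fin 2 → k)) :=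
    span_singleton_sup_span_singleton_eq_top fun y =>
      ⟨y 0 - y 1, y 1, by ext i; fin_cases i <;> simp⟩
  have top₃ : span k {![0, 1]} ⊔ span k {![1, 1]} = (⊤ : Submodule k (Fin 2 → k)) :=
    span_singleton_sup_span_singleton_eq_top fun y =>
      ⟨y 1 - y 0, y 0, by ext i; fin_cases i <;> simp⟩
  -- two of the three lines lie on the same side, and any two of them span `k²`
  rcases h10 with h10 | h10 <;> rcases h01 with h01 | h01 <;> rcases h11 with h11 | h11 <;>
    first
    | exact hU' (hUU'.eq_bot_of_sup_le top₁ h10 h01)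
    | exact hU' (hUU'.eq_bot_of_sup_le top₂ h10 h11)
    | exact hU' (hUU'.eq_bot_of_sup_le top₃ h01 h11)
    | exact hU (hUU'.symm.eq_bot_of_sup_le top₁ h10 h01)
    | exact hU (hUU'.symm.eq_bot_of_sup_le top₂ h10 h11)
    | exact hU (hUU'.symm.eq_bot_of_sup_le top₃ h01 h11)

theorem model_indec (i : ModelIndex n) : (model k n i).Indec := by
  rcases i with ⟨ℓ, a, b⟩ | ⟨⟨s, t⟩, hst⟩
  · exact lineRep_indec ℓ a b
  · exact planeRep_indec hst

end PosetRep

namespace PosetRep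
variable {k : Type} [Field k] {n : ℕ} {R : PosetRep k n}

theorem Indec.exists_iso_lineRep (hR : R.Indec) {m : Fin n}
    (hm : ∀ j, (m : ℕ) < j → R.flag j = ⊥) {x : Fin R.d → k} (hx : x ∈ R.flag m)
    {φ : (Fin R.d → k) →ₗ[k] k} (hφ : φ x = 1) (hL : x ∈ R.left ∨ ∀ y ∈ R.left, φ y = 0)
    (hR' : x ∈ R.right ∨ ∀ y ∈ R.right, φ y = 0) :
    ∃ a b, (lineRep k n m a b).Iso R := by
  have hpι : LinearMap.pi ![φ] ∘ₗ Fintype.linearCombination k ![x] = LinearMap.id :=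
    LinearMap.ext fun c => by
      ext i
      fin_cases i
      simp [Fintype.linearCombination_apply, hφ]
  have hom : ∀ (c : Prop) [Decidable c] (P : Submodule k (Fin R.d → k)), (c → x ∈ P) →
      (¬c → ∀ y ∈ P, φ y = 0) →
      (if c then ⊤ else ⊥ : Submodule k (Fin 1 → k)).map (Fintype.linearCombination k ![x]) ≤ P ∧
        P.map (LinearMap.pi ![φ]) ≤ if c then ⊤ else ⊥ := by
    intro c _ P hxP hφP
    by_cases hc : c
    · rw [if_pos hc]
      refine ⟨?_, le_top⟩
      rintro _ ⟨a, -, rfl⟩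
      simpa [Fintype.linearCombination_apply] using P.smul_mem (a 0) (hxP hc)
    · rw [if_neg hc, Submodule.map_bot]
      refine ⟨bot_le, ?_⟩
      rintro _ ⟨y, hy, rfl⟩
      rw [mem_bot]
      ext i
      fin_cases i
      simpa using hφP hc y hy
  have hchain : ∀ i : Fin (n - 1), ((i : ℕ) < m → x ∈ R.chain i) ∧
      (¬ (i : ℕ) < m → ∀ y ∈ R.chain i, φ y = 0) := fun i => by
    rw [← flag_succ]
    refine ⟨fun hi => R.flag_antitone hi hx, fun hi y hy => ?_⟩
    rw [hm _ (by omega), mem_bot] at hy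
    rw [hy, map_zero]
  have hside : ∀ P : Submodule k (Fin R.d → k), (x ∈ P ∨ ∀ y ∈ P, φ y = 0) →
      ∃ a : Bool, (a = true → x ∈ P) ∧ (¬ a = true → ∀ y ∈ P, φ y = 0) := fun P hP =>
    hP.elim (fun h => ⟨true, fun _ => h, by simp⟩) (fun h => ⟨false, by simp, fun _ => h⟩)
  obtain ⟨a, haL, haL'⟩ := hside _ hL
  obtain ⟨b, hbR, hbR'⟩ := hside _ hR'
  refine ⟨a, b, hR.iso_of_comp_eq_id one_ne_zero
    ⟨fun i => (hom _ _ (hchain i).1 (hchain i).2).1, (hom _ _ haL haL').1, (hom _ _ hbR hbR').1⟩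
    ⟨fun i => (hom _ _ (hchain i).1 (hchain i).2).2, (hom _ _ haL haL').2, (hom _ _ hbR hbR').2⟩
    hpι⟩

section Plane
variable {s t : Fin n} {u v : Fin R.d → k}

theorem isHom_planeRep_linearCombination (hu : u ∈ R.left ⊓ R.flag s)
    (hv : v ∈ R.right ⊓ R.flag s) (huv : u + v ∈ R.flag t) :
    IsHom (planeRep k n s t) R
      (Fintype.linearCombination k ![u, v] : (Fin 2 → k) →ₗ[k] Fin R.d → k) := by
  have hι : ∀ c : Fin 2 → k, Fintype.linearCombination k ![u, v] c = c 0 • u + c 1 • v :=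
    fun c => by simp [Fintype.linearCombination_apply, Fin.sum_univ_two]
  have span_le : ∀ (w : Fin 2 → k) (P : Submodule k (Fin R.d → k)), w 0 • u + w 1 • v ∈ P →
      (span k {w}).map (Fintype.linearCombination k ![u, v]) ≤ P :=
    fun w P h => (map_span_le _ _ _).mpr fun _ hw => by rwa [Set.mem_singleton_iff.mp hw, hι]
  refine ⟨fun i => ?_, span_le _ _ (by simpa using hu.1), span_le _ _ (by simpa using hv.1)⟩
  show (if (i : ℕ) < s then ⊤ else if (i : ℕ) < t then span k {![1, 1]} else ⊥ :
    Submodule k (Fin 2 → k)).map _ ≤ R.chain i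
  rw [← flag_succ]
  split_ifs with h1 h2
  · rintro _ ⟨c, -, rfl⟩
    rw [hι]
    exact add_mem (smul_mem _ _ (R.flag_antitone h1 hu.2)) (smul_mem _ _ (R.flag_antitone h1 hv.2))
  · exact span_le _ _ (by simpa using R.flag_antitone h2 huv)
  · rw [Submodule.map_bot]
    exact bot_le

theorem isHom_planeRep_pi {f g : (Fin R.d → k) →ₗ[k] k} (ht : ∀ j, (t : ℕ) < j → R.flag j = ⊥)
    (hf : ∀ y ∈ R.right, f y = 0) (hg : ∀ y ∈ R.left, g y = 0)
    (hfg : ∀ y ∈ R.flag (s + 1), g y = f y) :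
    IsHom R (planeRep k n s t) (LinearMap.pi ![f, g] : (Fin R.d → k) →ₗ[k] Fin 2 → k) := by
  have le_span : ∀ (P : Submodule k (Fin R.d → k)) (w : Fin 2 → k),
      (∀ y ∈ P, ∃ a : k, a • w = ![f y, g y]) → P.map (LinearMap.pi ![f, g]) ≤ span k {w} := by
    rintro P w h _ ⟨y, hy, rfl⟩
    obtain ⟨a, ha⟩ := h y hy
    refine mem_span_singleton.mpr ⟨a, ?_⟩
    rw [ha]
    ext i
    fin_cases i <;> simp
  refine ⟨fun i => ?_, le_span _ _ fun y hy => ⟨f y, by simp [hg y hy]⟩,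
    le_span _ _ fun y hy => ⟨g y, by simp [hf y hy]⟩⟩
  show (R.chain i).map _ ≤ (if (i : ℕ) < s then ⊤ else
    if (i : ℕ) < t then span k {![1, 1]} else ⊥ : Submodule k (Fin 2 → k))
  rw [← flag_succ]
  split_ifs with h1 h2
  · exact le_top
  · exact le_span _ _ fun y hy => ⟨f y, by simp [hfg y (R.flag_antitone (by omega) hy)]⟩
  · rw [ht _ (by omega), Submodule.map_bot]

theorem Indec.iso_planeRep (hR : R.Indec) (ht : ∀ j, (t : ℕ) < j → R.flag j = ⊥)
    (hu : u ∈ R.left ⊓ R.flag s) (hv : v ∈ R.right ⊓ R.flag s) (huv : u + v ∈ R.flag t)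
    {f g : (Fin R.d → k) →ₗ[k] k} (hfu : f u = 1) (hgv : g v = 1) (hf : ∀ y ∈ R.right, f y = 0)
    (hg : ∀ y ∈ R.left, g y = 0) (hfg : ∀ y ∈ R.flag (s + 1), g y = f y) :
    (planeRep k n s t).Iso R := by
  have hpι : LinearMap.pi ![f, g] ∘ₗ Fintype.linearCombination k ![u, v] = LinearMap.id :=
    LinearMap.ext fun c => by
      ext i
      fin_cases i <;>
        simp [Fintype.linearCombination_apply, Fin.sum_univ_two, hfu, hgv, hf v hv.1, hg u hu.1]
  exact hR.iso_of_comp_eq_id two_ne_zero (isHom_planeRep_linearCombination hu hv huv)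
    (isHom_planeRep_pi ht hf hg hfg) hpι

end Plane

theorem Indec.exists_iso_model (hn : 1 ≤ n) {R : PosetRep k n} (hR : R.Indec) :
    ∃ i, (model k n i).Iso R := by
  obtain ⟨m, hm0, hm⟩ := R.exists_last_flag hn hR.1
  rcases exists_dual_line_or (A := R.left) (B := R.right) hm0 with
    ⟨x, hx, φ, hφ, hL, hR'⟩ | ⟨hmL, hmR, u, hu, v, hv, huv, huv0⟩
  · obtain ⟨a, b, h⟩ := hR.exists_iso_lineRep hm hx hφ hL hR'
    exact ⟨.inl (m, a, b), h⟩
  · obtain ⟨s, hsm, u, hu, v, hv, huv, f, g, hfu, hgv, hf, hg, hfg⟩ :=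
      exists_dual_plane R.flag_antitone R.flag_zero hmL hmR hu hv huv huv0
    exact ⟨.inr ⟨(⟨s, hsm.trans m.2⟩, m), hsm⟩,
      hR.iso_planeRep hm hu hv huv hfu hgv hf hg hfg⟩

end PosetRep
/-- The number of isomorphism classes of indecomposable representations of
`𝒫_n` equals `(1/2)n² + (7/2)n`; equivalently `(n²+3n+2) − (n²−n)/2 − 2`. -/
theorem count_indecomposable_poset_reps
    (k : Type) [Field k] (n : ℕ) (hn : 1 ≤ n) :
    Nat.card (Quot (fun R S : {R : PosetRep k n // R.Indec} => R.1.Iso S.1))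
        = (n ^ 2 + 3 * n + 2) - (n ^ 2 - n) / 2 - 2 ∧
    2 * Nat.card (Quot (fun R S : {R : PosetRep k n // R.Indec} => R.1.Iso S.1))
        = n ^ 2 + 7 * n := by
  have hcard : Nat.card (Quot (fun R S : {R : PosetRep k n // R.Indec} => R.1.Iso S.1)) =
      Fintype.card (PosetRep.ModelIndex n) := by
    rw [Nat.card_quot_eq_of_representatives (PosetRep.iso_equivalence.comap Subtype.val)
      (fun i => ⟨PosetRep.model k n i, PosetRep.model_indec i⟩) (fun R => R.2.exists_iso_model hn)
      (fun _ _ h => PosetRep.eq_of_iso_model h), Nat.card_eq_fintype_card]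
  have h2 := PosetRep.two_mul_card_modelIndex n
  rw [hcard]
  refine ⟨?_, h2⟩
  have : n ≤ n ^ 2 := Nat.le_self_pow two_ne_zero n
  omega
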